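/- Let ⟨T,𝒫⟩ be a representation of a pair (G,G'), and let e = {p,q} ∈ E(G') be contractible in (G,G'). Define the family 𝒫', indexed by the vertex set of G/e (the vertices of G with p and q replaced by the merged vertex pq), by P'_{pq} = P_p ∪ P_q (a path of T, since P_p ∼ P_q) and P'_x = P_x for every other vertex x. Then ⟨T,𝒫'⟩ is a representation of the contracted pair (G/e, G'/e). -/

import Mathlib

open SimpleGraph

namespace ENPT

variable {β V W U : Type}

/-- A graph on a subset of `β`, modeled as a subgraph of the complete graph on `β`. -/
abbrev SubG (β : Type) := SimpleGraph.Subgraph (⊤ : SimpleGraph β)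

/-- `H` is a path: connected, with at least one edge, and maximum degree 2. -/
def IsPathSub (H : SubG β) : Prop :=
  H.Connected ∧ H.edgeSet.Nonempty ∧ ∀ v : β, (H.neighborSet v).ncard ≤ 2

/-- The split vertices of two subgraphs: vertices of degree at least 3 in their union. -/
def Split (P Q : SubG β) : Set β := {v | 3 ≤ ((P ⊔ Q).neighborSet v).ncard}

/-- Two subgraphs edge-intersect. -/
def EdgeInt (P Q : SubG β) : Prop := (P.edgeSet ∩ Q.edgeSet).Nonempty

lemma EdgeInt.symm {P Q : SubG β} (h : EdgeInt P Q) : EdgeInt Q P := by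
  unfold EdgeInt at h ⊢; rwa [Set.inter_comm]

lemma Split_comm (P Q : SubG β) : Split P Q = Split Q P := by
  unfold Split; rw [sup_comm]

/-- `P ∼ Q` : edge-intersecting and non-splitting. -/
def NonSplit (P Q : SubG β) : Prop := EdgeInt P Q ∧ Split P Q = ∅

lemma NonSplit.symm {P Q : SubG β} (h : NonSplit P Q) : NonSplit Q P :=
  ⟨h.1.symm, by rw [Split_comm]; exact h.2⟩

/-- The EPT graph of a family of paths. -/
def EPTg (Ps : V → SubG β) : SimpleGraph V where
  Adj u v := u ≠ v ∧ EdgeInt (Ps u) (Ps v)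
  symm := ⟨fun u v h => ⟨Ne.symm h.1, h.2.symm⟩⟩
  loopless := ⟨fun u h => h.1 rfl⟩

/-- The ENPT graph of a family of paths. -/
def ENPTg (Ps : V → SubG β) : SimpleGraph V where
  Adj u v := u ≠ v ∧ NonSplit (Ps u) (Ps v)
  symm := ⟨fun u v h => ⟨Ne.symm h.1, h.2.symm⟩⟩
  loopless := ⟨fun u h => h.1 rfl⟩

/-- `⟨T, Ps⟩` is a representation of the pair `(G, G')`. -/
structure IsRep (T : SubG β) (Ps : V → SubG β) (G G' : SimpleGraph V) : Prop where
  tree : T.coe.IsTree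
  sub : ∀ v, Ps v ≤ T
  path : ∀ v, IsPathSub (Ps v)
  ept : EPTg Ps = G
  enpt : ENPTg Ps = G'

/-- Property (P3) of a representation: no red edge-clique of size 3. -/
def SatP3 (Ps : V → SubG β) : Prop :=
  ¬ ∃ (e : Sym2 β) (p q r : V), p ≠ q ∧ p ≠ r ∧ q ≠ r ∧
    e ∈ (Ps p).edgeSet ∧ e ∈ (Ps q).edgeSet ∧ e ∈ (Ps r).edgeSet ∧
    (Split (Ps p) (Ps q)).Nonempty ∧ (Split (Ps p) (Ps r)).Nonempty ∧
    (Split (Ps q) (Ps r)).Nonempty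

/-- The map merging `q` into `p`. -/
def mergeMap [DecidableEq V] (p q : V) : V → V := fun x => if x = q then p else x

/-- The image of a subgraph under the merge of `b` into `a` (contraction of `{a,b}`). -/
def cImage [DecidableEq β] (a b : β) (H : SubG β) : SubG β where
  verts := mergeMap a b '' H.verts
  Adj x y := x ≠ y ∧ ∃ x' y', H.Adj x' y' ∧ x = mergeMap a b x' ∧ y = mergeMap a b y'
  adj_sub := by
    rintro x y ⟨h, -⟩
    exact h
  edge_vert := by
    rintro x y ⟨h, x', y', hadj, rfl, rfl⟩
    exact ⟨x', H.edge_vert hadj, rfl⟩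
  symm := by
    constructor
    rintro x y ⟨h, x', y', hadj, rfl, rfl⟩
    exact ⟨h.symm, y', x', hadj.symm, rfl, rfl⟩

/-- Delete from `H` the vertex `x` and all edges at `x` (used for tail removal). -/
def delTail (x : β) (H : SubG β) : SubG β where
  verts := H.verts \ {x}
  Adj u w := H.Adj u w ∧ u ≠ x ∧ w ≠ x
  adj_sub := fun h => H.adj_sub h.1
  edge_vert := by
    rintro u w ⟨h, hu, hw⟩
    exact ⟨H.edge_vert h, by simpa using hu⟩
  symm := by
    constructor
    rintro u w ⟨h, hu, hw⟩
    exact ⟨h.symm, hw, hu⟩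

/-- A pair `⟨tree, family of paths⟩`. -/
structure Rep (β V : Type) where
  T : SubG β
  P : V → SubG β

/-- Well-formedness: the tree is a tree and each member of the family is a path of it. -/
def Rep.WF (R : Rep β V) : Prop :=
  R.T.coe.IsTree ∧ (∀ v, R.P v ≤ R.T) ∧ ∀ v, IsPathSub (R.P v)

/-- `R` is a representation of the pair `(G, G')`. -/
def Rep.IsRepOf (R : Rep β V) (G G' : SimpleGraph V) : Prop := IsRep R.T R.P G G'

/-- A single minifying operation: contraction of a tree edge, or removal of a tail of
one of the paths. -/
inductive MinifyStep [DecidableEq β] [DecidableEq V] : Rep β V → Rep β V → Prop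
  | contract (R : Rep β V) (a b : β) (hab : R.T.Adj a b)
      (hkeep : ∀ v, (cImage a b (R.P v)).edgeSet.Nonempty) :
      MinifyStep R ⟨cImage a b R.T, fun v => cImage a b (R.P v)⟩
  | tail (R : Rep β V) (v₀ : V) (x y : β) (hxy : (R.P v₀).Adj x y)
      (hdeg : ((R.P v₀).neighborSet x).ncard = 1)
      (htwo : 2 ≤ (R.P v₀).edgeSet.ncard) :
      MinifyStep R ⟨R.T, Function.update R.P v₀ (delTail x (R.P v₀))⟩

/-- A minimal representation of `(G, G')`: no single minifying operation yields again a
representation of `(G, G')`. -/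
def IsMinimalRep [DecidableEq β] [DecidableEq V] (T : SubG β) (Ps : V → SubG β)
    (G G' : SimpleGraph V) : Prop :=
  IsRep T Ps G G' ∧ ∀ R' : Rep β V, MinifyStep ⟨T, Ps⟩ R' → ¬ R'.IsRepOf G G'

/-- The cycle on `ZMod n`, vertices labeled in cyclic order. -/
def cycleG (n : ℕ) : SimpleGraph (ZMod n) :=
  SimpleGraph.fromRel (fun i j => j = i + 1)

/-- Property (P2) of a pair: no four vertices inducing a `K4` in `G` and a `P4` in `G'`. -/
def NoK4P4 (G G' : SimpleGraph V) : Prop :=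
  ¬ ∃ a b c d : V,
    G.Adj a b ∧ G.Adj a c ∧ G.Adj a d ∧ G.Adj b c ∧ G.Adj b d ∧ G.Adj c d ∧
    G'.Adj a b ∧ G'.Adj b c ∧ G'.Adj c d ∧ ¬G'.Adj a c ∧ ¬G'.Adj a d ∧ ¬G'.Adj b d

/-- The contraction `G/e` of the edge `e = {p,q}`, merging `q` into `p`,
realized on the vertex set `V ∖ {q}`. -/
def contrG [DecidableEq V] (G : SimpleGraph V) (p q : V) : SimpleGraph {x : V // x ≠ q} where
  Adj a b := a ≠ b ∧ ∃ x y : V, G.Adj x y ∧ (a : V) = mergeMap p q x ∧ (b : V) = mergeMap p q y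
  symm := by
    constructor
    rintro a b ⟨h, x, y, hxy, hx, hy⟩
    exact ⟨h.symm, y, x, hxy.symm, hy, hx⟩
  loopless := by constructor; rintro a ⟨h, -⟩; exact h rfl

/-- The contractibility condition for the edge `{p,q}` in the pair `(G,G')`:
no edge of `G'` sharing exactly one endpoint with `{p,q}` closes a triangle of `G`. -/
def ContractibleCond (G G' : SimpleGraph V) (p q : V) : Prop :=
  ∀ r : V, (G'.Adj p r → r ≠ q → ¬ G.Adj q r) ∧ (G'.Adj q r → r ≠ p → ¬ G.Adj p r)

/-- `{p,q}` is a contractible edge of the pair `(G,G')`. -/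
def ContractibleEdge (G G' : SimpleGraph V) (p q : V) : Prop :=
  G'.Adj p q ∧ ContractibleCond G G' p q

/-- `core` is a path between the two (distinct) endpoints `u` and `v`. -/
def IsPathBetween (core : SubG β) (u v : β) : Prop :=
  IsPathSub core ∧ u ∈ core.verts ∧ v ∈ core.verts ∧
    ∀ w ∈ core.verts, ((core.neighborSet w).ncard = 1 ↔ (w = u ∨ w = v))

/-- Delete a set of edges from a subgraph (keeping the vertices). -/
def delEdgesSub (H : SubG β) (s : Set (Sym2 β)) : SubG β where
  verts := H.verts
  Adj x y := H.Adj x y ∧ s(x, y) ∉ s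
  adj_sub := fun h => H.adj_sub h.1
  edge_vert := fun h => H.edge_vert h.1
  symm := by
    constructor
    rintro x y ⟨h, hs⟩
    refine ⟨h.symm, ?_⟩
    rwa [Sym2.eq_swap]

/-- The join of two graphs. -/
def joinG (H : SimpleGraph W) (K : SimpleGraph U) : SimpleGraph (W ⊕ U) where
  Adj x y :=
    match x, y with
    | Sum.inl a, Sum.inl b => H.Adj a b
    | Sum.inr a, Sum.inr b => K.Adj a b
    | Sum.inl _, Sum.inr _ => True
    | Sum.inr _, Sum.inl _ => True
  symm := by
    constructor
    rintro (a | a) (b | b) h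
    · exact h.symm
    · trivial
    · trivial
    · exact h.symm
  loopless := by
    constructor
    rintro (a | a) h
    · exact H.loopless.irrefl a h
    · exact K.loopless.irrefl a h

/-- The component graph `comp(G,C,K)`: vertices are the connected components of the
subgraph of `G` induced on the complement of `K`, two components being adjacent iff some
vertex of `K` is adjacent in `C` to both of them. -/
def compGraph (G C : SimpleGraph V) (K : Set V) :
    SimpleGraph (SimpleGraph.induce (Kᶜ : Set V) G).ConnectedComponent where
  Adj A B := A ≠ B ∧ ∃ v ∈ K, ∃ a b : (Kᶜ : Set V),
    C.Adj v (a : V) ∧ C.Adj v (b : V) ∧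
    (SimpleGraph.induce (Kᶜ : Set V) G).connectedComponentMk a = A ∧
    (SimpleGraph.induce (Kᶜ : Set V) G).connectedComponentMk b = B
  symm := by
    constructor
    rintro A B ⟨h, v, hv, a, b, h1, h2, h3, h4⟩
    exact ⟨h.symm, v, hv, b, a, h2, h1, h4, h3⟩
  loopless := by constructor; rintro A ⟨h, -⟩; exact h rfl

/-- The map merging both endpoints of an edge into the smaller one. -/
def minMerge [LinearOrder V] (a b : V) : V → V :=
  fun x => if x = a ∨ x = b then min a b else x

/-- Contraction of the edge `{a,b}` of a graph, the merged vertex being named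
`min a b` (the other endpoint remains as an isolated vertex). -/
def contrMin [LinearOrder V] (G : SimpleGraph V) (a b : V) : SimpleGraph V where
  Adj x y := x ≠ y ∧ ∃ x' y', G.Adj x' y' ∧ x = minMerge a b x' ∧ y = minMerge a b y'
  symm := by
    constructor
    rintro x y ⟨h, x', y', hxy, hx, hy⟩
    exact ⟨h.symm, y', x', hxy.symm, hy, hx⟩
  loopless := by constructor; rintro x ⟨h, -⟩; exact h rfl

/-- Simultaneous contraction in a pair of graphs. -/
def stepPair [LinearOrder V] (GG : SimpleGraph V × SimpleGraph V) (e : V × V) :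
    SimpleGraph V × SimpleGraph V :=
  (contrMin GG.1 e.1 e.2, contrMin GG.2 e.1 e.2)

/-- Iterated contraction of a list of edges (given by their original names; `f` is the
accumulated merging map). -/
def contractGo [LinearOrder V] (f : V → V) (GG : SimpleGraph V × SimpleGraph V) :
    List (V × V) → SimpleGraph V × SimpleGraph V
  | [] => GG
  | e :: l => contractGo (minMerge (f e.1) (f e.2) ∘ f) (stepPair GG (f e.1, f e.2)) l

/-- The iterated contraction is defined: at each step the image of the next edge is an
edge of the current second graph and is contractible in the current pair. -/
def DefinedGo [LinearOrder V] (f : V → V) (GG : SimpleGraph V × SimpleGraph V) :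
    List (V × V) → Prop
  | [] => True
  | e :: l => (GG.2.Adj (f e.1) (f e.2) ∧ ContractibleCond GG.1 GG.2 (f e.1) (f e.2)) ∧
      DefinedGo (minMerge (f e.1) (f e.2) ∘ f) (stepPair GG (f e.1, f e.2)) l

/-! Since `P_p ∼ P_q`, the union `P_p ∪ P_q` is a path, and it edge-intersects `P_b` iff `P_p`
or `P_q` does. For the ENPT graph, say `P_p ∼ P_b`; contractibility says that `P_q` and `P_b`
share no edge, and in a tree this forces `P_p ∪ P_q ∼ P_b`. Indeed, a vertex `v` of degree 3 in
`P_p ∪ P_q ∪ P_b` lies on `P_q` and on `P_b`. The tree path from `v` to an edge of `P_p ∩ P_b`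
lies in `P_b` and in `P_p ∪ P_q`, so its first edge `vc` lies in `P_p ∩ P_b`; symmetrically some
`vc'` lies in `P_p ∩ P_q`. Then `c ≠ c'`, and `v` has no room for a third neighbour in
`P_p ∪ P_q` nor in `P_p ∪ P_b`. -/

-- By uniqueness of tree paths, the path `w` runs inside `H`.
lemma adj_snd_of_isPath {T H : SubG β} (hT : T.coe.IsTree) (hHT : H ≤ T)
    (hH : H.Connected) {x y : T.verts} (hx : (x : β) ∈ H.verts) (hy : (y : β) ∈ H.verts)
    (hxy : x ≠ y) {w : T.coe.Walk x y} (hw : w.IsPath) : H.Adj x w.snd := by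
  classical
  obtain ⟨u⟩ := hH.preconnected ⟨x, hx⟩ ⟨y, hy⟩
  have hinj : Function.Injective (Subgraph.inclusion hHT) := Subgraph.inclusion.injective hHT
  have hu : u.bypass.map (Subgraph.inclusion hHT) = w :=
    (hT.existsUnique_path x y).unique (u.bypass_isPath.map hinj) hw
  have hnil : ¬ u.bypass.Nil := fun h => hxy (Subtype.ext (by simpa using h.eq))
  subst hu
  show H.Adj x (((u.bypass.map (Subgraph.inclusion hHT)).getVert 1 : T.verts) : β)
  rw [Walk.getVert_map]
  exact Walk.adj_snd hnil

lemma exists_adj_adj_of_edgeInt {T H K : SubG β} (hT : T.coe.IsTree) (hHT : H ≤ T)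
    (hKT : K ≤ T) (hH : H.Connected) (hK : K.Connected) {v : β} (hvH : v ∈ H.verts)
    (hvK : v ∈ K.verts) (hHK : EdgeInt H K) : ∃ c, H.Adj v c ∧ K.Adj v c := by
  obtain ⟨e, heH, heK⟩ := hHK
  induction e using Sym2.ind with
  | _ x y =>
    by_cases hxv : x = v
    · exact ⟨y, hxv ▸ heH, hxv ▸ heK⟩
    have hxH : x ∈ H.verts := H.edge_vert heH
    have hxK : x ∈ K.verts := K.edge_vert heK
    obtain ⟨w, hw, -⟩ := hT.existsUnique_path ⟨v, hHT.1 hvH⟩ ⟨x, hHT.1 hxH⟩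
    have hne : (⟨v, hHT.1 hvH⟩ : T.verts) ≠ ⟨x, hHT.1 hxH⟩ :=
      fun h => hxv (congrArg Subtype.val h).symm
    exact ⟨w.snd, adj_snd_of_isPath hT hHT hH hvH hxH hne hw,
      adj_snd_of_isPath hT hKT hK hvK hxK hne hw⟩

lemma edgeInt_sup_left_iff {A B C : SubG β} :
    EdgeInt (A ⊔ B) C ↔ EdgeInt A C ∨ EdgeInt B C := by
  rw [EdgeInt, EdgeInt, EdgeInt, Subgraph.edgeSet_sup, Set.union_inter_distrib_right,
    Set.union_nonempty]

lemma EdgeInt.connected_sup {A B : SubG β} (hA : A.Connected) (hB : B.Connected)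
    (hAB : EdgeInt A B) : (A ⊔ B).Connected := by
  obtain ⟨e, heA, heB⟩ := hAB
  induction e using Sym2.ind with
  | _ x y =>
    exact Subgraph.connected_sup hA.preconnected hB.preconnected
      ⟨x, A.edge_vert heA, B.edge_vert heB⟩

lemma ncard_neighborSet_union_le_of_split_eq_empty {A B : SubG β} (h : Split A B = ∅) (v : β) :
    (A.neighborSet v ∪ B.neighborSet v).ncard ≤ 2 := by
  have hv : v ∉ Split A B := by
    rw [h]
    exact Set.notMem_empty v
  change ¬ 3 ≤ _ at hv
  rw [Subgraph.neighborSet_sup] at hv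
  omega

lemma neighborSet_eq_empty_of_notMem {H : SubG β} {v : β} (hv : v ∉ H.verts) :
    H.neighborSet v = ∅ :=
  Set.eq_empty_of_forall_notMem fun _ hw => hv (H.edge_vert hw)

lemma IsPathSub.sup {A B : SubG β} (hA : IsPathSub A) (hB : IsPathSub B) (hAB : NonSplit A B) :
    IsPathSub (A ⊔ B) := by
  refine ⟨hAB.1.connected_sup hA.1 hB.1, ?_, fun v => ?_⟩
  · rw [Subgraph.edgeSet_sup]
    exact hA.2.1.mono Set.subset_union_left
  · rw [Subgraph.neighborSet_sup]
    exact ncard_neighborSet_union_le_of_split_eq_empty hAB.2 v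

lemma split_mono_left [Finite β] {A A' C : SubG β} (h : A ≤ A') : Split A C ⊆ Split A' C := by
  intro v (hv : 3 ≤ _)
  rw [Subgraph.neighborSet_sup] at hv
  show 3 ≤ _
  rw [Subgraph.neighborSet_sup]
  exact hv.trans (Set.ncard_le_ncard (Set.union_subset_union_left _
    (Subgraph.neighborSet_subset_of_subgraph h v)))

lemma NonSplit.sup_left [Finite β] {T A B C : SubG β} (hT : T.coe.IsTree) (hAT : A ≤ T)
    (hBT : B ≤ T) (hCT : C ≤ T) (hA : A.Connected) (hB : B.Connected) (hC : C.Connected)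
    (hAB : NonSplit A B) (hAC : NonSplit A C) (hBC : ¬ EdgeInt B C) :
    NonSplit (A ⊔ B) C := by
  refine ⟨edgeInt_sup_left_iff.2 (Or.inl hAC.1), ?_⟩
  refine Set.eq_empty_of_forall_notMem fun v (hv : 3 ≤ _) => ?_
  have hAB2 := ncard_neighborSet_union_le_of_split_eq_empty hAB.2 v
  have hAC2 := ncard_neighborSet_union_le_of_split_eq_empty hAC.2 v
  simp only [Subgraph.neighborSet_sup] at hv
  have hvB : v ∈ B.verts := by
    by_contra h
    rw [neighborSet_eq_empty_of_notMem h, Set.union_empty] at hv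
    omega
  have hvC : v ∈ C.verts := by
    by_contra h
    rw [neighborSet_eq_empty_of_notMem h, Set.union_empty] at hv
    omega
  obtain ⟨c, hc, hcC⟩ := exists_adj_adj_of_edgeInt hT (sup_le hAT hBT) hCT
    (hAB.1.connected_sup hA hB) hC (Or.inr hvB) hvC (edgeInt_sup_left_iff.2 (Or.inl hAC.1))
  have hcA : A.Adj v c := hc.resolve_right fun hcB => hBC ⟨s(v, c), hcB, hcC⟩
  obtain ⟨c', hc', hc'B⟩ := exists_adj_adj_of_edgeInt hT (sup_le hAT hCT) hBT
    (hAC.1.connected_sup hA hC) hB (Or.inr hvC) hvB (edgeInt_sup_left_iff.2 (Or.inl hAB.1))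
  have hc'A : A.Adj v c' := hc'.resolve_right fun hc'C => hBC ⟨s(v, c'), hc'B, hc'C⟩
  have hne : c ≠ c' := by
    rintro rfl
    exact hBC ⟨s(v, c), hc'B, hcC⟩
  have hpair : ∀ D : SubG β, (A.neighborSet v ∪ D.neighborSet v).ncard ≤ 2 →
      A.neighborSet v ∪ D.neighborSet v = {c, c'} := fun D hD =>
    (Set.eq_of_subset_of_ncard_le
      (Set.pair_subset (Set.mem_union_left _ hcA) (Set.mem_union_left _ hc'A))
      (by rwa [Set.ncard_pair hne]) (Set.toFinite _)).symm
  have hN : A.neighborSet v ∪ B.neighborSet v ∪ C.neighborSet v = {c, c'} := by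
    calc _ = (A.neighborSet v ∪ B.neighborSet v) ∪ (A.neighborSet v ∪ C.neighborSet v) := by
          rw [Set.union_union_union_comm, Set.union_self, Set.union_assoc]
      _ = {c, c'} := by rw [hpair B hAB2, hpair C hAC2, Set.union_self]
  rw [hN, Set.ncard_pair hne] at hv
  omega

lemma NonSplit.of_sup_left [Finite β] {A B C : SubG β} (h : NonSplit (A ⊔ B) C)
    (hAC : EdgeInt A C) : NonSplit A C :=
  ⟨hAC, Set.subset_empty_iff.1 (h.2 ▸ split_mono_left le_sup_left)⟩

lemma nonSplit_sup_left_iff [Finite β] {T A B C : SubG β} (hT : T.coe.IsTree) (hAT : A ≤ T)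
    (hBT : B ≤ T) (hCT : C ≤ T) (hA : A.Connected) (hB : B.Connected) (hC : C.Connected)
    (hAB : NonSplit A B) (hAC : NonSplit A C → ¬ EdgeInt B C)
    (hBC : NonSplit B C → ¬ EdgeInt A C) :
    NonSplit (A ⊔ B) C ↔ NonSplit A C ∨ NonSplit B C := by
  constructor
  · intro h
    rcases edgeInt_sup_left_iff.1 h.1 with h' | h'
    · exact Or.inl (h.of_sup_left h')
    · exact Or.inr ((sup_comm A B ▸ h).of_sup_left h')
  · rintro (h | h)
    · exact NonSplit.sup_left hT hAT hBT hCT hA hB hC hAB h (hAC h)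
    · exact sup_comm B A ▸ NonSplit.sup_left hT hBT hAT hCT hB hA hC hAB.symm h (hBC h)

section Contraction

variable [DecidableEq V] {p q : V}

lemma mergeMap_eq_left_iff {x : V} : mergeMap p q x = p ↔ x = p ∨ x = q := by
  unfold mergeMap
  split_ifs <;> tauto

lemma mergeMap_eq_iff_of_ne {a x : V} (hap : a ≠ p) (haq : a ≠ q) :
    mergeMap p q x = a ↔ x = a := by
  unfold mergeMap
  split_ifs with hx
  · subst hx
    exact iff_of_false hap.symm haq.symm
  · rfl

lemma contrG_adj_iff_of_ne {K : SimpleGraph V} {a b : {x : V // x ≠ q}} (ha : (a : V) ≠ p)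
    (hb : (b : V) ≠ p) : (contrG K p q).Adj a b ↔ K.Adj a b := by
  simp only [contrG, eq_comm (a := (a : V)), eq_comm (a := (b : V)),
    mergeMap_eq_iff_of_ne ha a.2, mergeMap_eq_iff_of_ne hb b.2]
  constructor
  · rintro ⟨-, x, y, hxy, rfl, rfl⟩
    exact hxy
  · exact fun h => ⟨fun hab => h.ne (congrArg Subtype.val hab), a, b, h, rfl, rfl⟩

lemma contrG_adj_left_iff {K : SimpleGraph V} (hpq : p ≠ q) {b : {x : V // x ≠ q}}
    (hb : (b : V) ≠ p) : (contrG K p q).Adj ⟨p, hpq⟩ b ↔ K.Adj p b ∨ K.Adj q b := by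
  simp only [contrG, eq_comm (a := p), eq_comm (a := (b : V)), mergeMap_eq_left_iff,
    mergeMap_eq_iff_of_ne hb b.2]
  constructor
  · rintro ⟨-, x, y, hxy, rfl | rfl, rfl⟩
    · exact Or.inl hxy
    · exact Or.inr hxy
  · refine fun h => ⟨fun hpb => hb (congrArg Subtype.val hpb).symm, ?_⟩
    rcases h with h | h
    · exact ⟨p, b, h, Or.inl rfl, rfl⟩
    · exact ⟨q, b, h, Or.inr rfl, rfl⟩

def mergeFamily (Ps : V → SubG β) (p q : V) : {x : V // x ≠ q} → SubG β :=
  fun x => if (x : V) = p then Ps p ⊔ Ps q else Ps x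

lemma contrG_adj_iff_mergeFamily {R : SubG β → SubG β → Prop} (hR : ∀ A B, R A B → R B A)
    {K : SimpleGraph V} {Ps : V → SubG β}
    (hK : ∀ x y, K.Adj x y ↔ x ≠ y ∧ R (Ps x) (Ps y))
    (hpq : p ≠ q)
    (hmerge : ∀ b, b ≠ p → b ≠ q → (R (Ps p ⊔ Ps q) (Ps b) ↔ K.Adj p b ∨ K.Adj q b))
    (a b : {x : V // x ≠ q}) :
    (contrG K p q).Adj a b ↔ a ≠ b ∧ R (mergeFamily Ps p q a) (mergeFamily Ps p q b) := by
  have hleft : ∀ b : {x : V // x ≠ q}, (b : V) ≠ p →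
      ((contrG K p q).Adj ⟨p, hpq⟩ b ↔ R (Ps p ⊔ Ps q) (Ps b)) := fun b hb => by
    rw [contrG_adj_left_iff hpq hb, hmerge b hb b.2]
  obtain ⟨a, ha⟩ := a
  obtain ⟨b, hb⟩ := b
  simp only [mergeFamily, ne_eq, Subtype.mk.injEq]
  by_cases hap : a = p <;> by_cases hbp : b = p
  · subst hap hbp
    simp
  · subst hap
    simp only [hleft ⟨b, hb⟩ hbp, if_pos, if_neg hbp, Ne.symm hbp, not_false_eq_true, true_and]
  · subst hbp
    rw [(contrG K b q).adj_comm, hleft ⟨a, ha⟩ hap]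
    simp only [if_pos, hap, not_false_eq_true, true_and]
    exact ⟨hR _ _, hR _ _⟩
  · rw [contrG_adj_iff_of_ne hap hbp, hK]
    simp only [if_neg hap, if_neg hbp, ne_eq]

end Contraction

theorem stmt2_general {β V : Type} [Fintype β] [DecidableEq V]
    (T : SubG β) (Ps : V → SubG β) (G G' : SimpleGraph V)
    (hrep : IsRep T Ps G G') (p q : V) (hcon : ContractibleEdge G G' p q) :
    IsRep T (fun x : {x : V // x ≠ q} => if (x : V) = p then Ps p ⊔ Ps q else Ps (x : V))
      (contrG G p q) (contrG G' p q) := by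
  have hG : ∀ x y, G.Adj x y ↔ x ≠ y ∧ EdgeInt (Ps x) (Ps y) := fun x y => by
    rw [← hrep.ept]; rfl
  have hG' : ∀ x y, G'.Adj x y ↔ x ≠ y ∧ NonSplit (Ps x) (Ps y) := fun x y => by
    rw [← hrep.enpt]; rfl
  have hpq : p ≠ q := hcon.1.ne
  have hPpq : NonSplit (Ps p) (Ps q) := ((hG' p q).1 hcon.1).2
  have hmergeG (b : V) (hbp : b ≠ p) (hbq : b ≠ q) :
      EdgeInt (Ps p ⊔ Ps q) (Ps b) ↔ G.Adj p b ∨ G.Adj q b := by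
    rw [edgeInt_sup_left_iff, hG, hG]
    simp only [hbp.symm, hbq.symm, ne_eq, not_false_eq_true, true_and]
  have hmergeG' (b : V) (hbp : b ≠ p) (hbq : b ≠ q) :
      NonSplit (Ps p ⊔ Ps q) (Ps b) ↔ G'.Adj p b ∨ G'.Adj q b := by
    rw [hG', hG', nonSplit_sup_left_iff hrep.tree (hrep.sub p) (hrep.sub q) (hrep.sub b)
      (hrep.path p).1 (hrep.path q).1 (hrep.path b).1 hPpq]
    · simp only [hbp.symm, hbq.symm, ne_eq, not_false_eq_true, true_and]
    · exact fun h he =>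
        (hcon.2 b).1 ((hG' p b).2 ⟨hbp.symm, h⟩) hbq ((hG q b).2 ⟨hbq.symm, he⟩)
    · exact fun h he =>
        (hcon.2 b).2 ((hG' q b).2 ⟨hbq.symm, h⟩) hbp ((hG p b).2 ⟨hbp.symm, he⟩)
  change IsRep T (mergeFamily Ps p q) _ _
  refine ⟨hrep.tree, fun x => ?_, fun x => ?_, ?_, ?_⟩
  · unfold mergeFamily
    split_ifs
    exacts [sup_le (hrep.sub p) (hrep.sub q), hrep.sub x]
  · unfold mergeFamily
    split_ifs
    exacts [(hrep.path p).sup (hrep.path q) hPpq, hrep.path x]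
  · ext a b
    exact (contrG_adj_iff_mergeFamily (fun _ _ h => h.symm) hG hpq hmergeG a b).symm
  · ext a b
    exact (contrG_adj_iff_mergeFamily (fun _ _ h => h.symm) hG' hpq hmergeG' a b).symm

/-- replacing `P_p, P_q` by their union yields a representation of the
contracted pair `(G/e, G'/e)`. -/
theorem stmt2 {β V : Type} [Fintype β] [Fintype V] [DecidableEq V]
    (T : SubG β) (Ps : V → SubG β) (G G' : SimpleGraph V) (hle : G' ≤ G)
    (hrep : IsRep T Ps G G') (p q : V) (hcon : ContractibleEdge G G' p q) :
    IsRep T (fun x : {x : V // x ≠ q} => if (x : V) = p then Ps p ⊔ Ps q else Ps (x : V))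
      (contrG G p q) (contrG G' p q) :=
  stmt2_general T Ps G G' hrep p q hcon

end ENPT
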